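/- For the hom-associative Weyl algebra A₁ᵏ, the left nucleus N_l(A₁ᵏ) := {a ∈ A₁ : (a,b,c)_* = 0 for all b,c ∈ A₁}, the middle nucleus N_m(A₁ᵏ) := {b ∈ A₁ : (a,b,c)_* = 0 for all a,c ∈ A₁}, and the right nucleus N_r(A₁ᵏ) := {c ∈ A₁ : (a,b,c)_* = 0 for all a,b ∈ A₁} all equal {0} if and only if k ≠ 0, where (a,b,c)_* := (a * b) * c − a * (b * c) and a * b := α_k(a·b). -/

import Mathlib

noncomputable section

/-- The defining relation of the first Weyl algebra: `x * y = y * x + 1`. -/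
inductive WeylRel (K : Type*) [Field K] :
    FreeAlgebra K (Fin 2) → FreeAlgebra K (Fin 2) → Prop
  | comm : WeylRel K (FreeAlgebra.ι K 0 * FreeAlgebra.ι K 1)
      (FreeAlgebra.ι K 1 * FreeAlgebra.ι K 0 + 1)

/-- The first Weyl algebra `A₁` over `K`: the free unital associative `K`-algebra on two
generators `x, y` modulo the relation `x·y − y·x = 1`. -/
abbrev Weyl (K : Type*) [Field K] := RingQuot (WeylRel K)

/-- The generator `x` of the first Weyl algebra. -/
def Wx (K : Type*) [Field K] : Weyl K :=
  RingQuot.mkAlgHom K (WeylRel K) (FreeAlgebra.ι K 0)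

/-- The generator `y` of the first Weyl algebra. -/
def Wy (K : Type*) [Field K] : Weyl K :=
  RingQuot.mkAlgHom K (WeylRel K) (FreeAlgebra.ι K 1)

/-
Left multiplication on normal forms `∑ cₙ(y) xⁿ` is a faithful representation of `A₁` on
`K[y][x]`, in which `x` raises the `x`-degree by one without changing the top coefficient;
comparing top coefficients shows that `A₁` is a domain. Since `α(y) = f(y)` with `f' = 1` in
characteristic `p`, on normal forms `α` just substitutes `f` for `y` in the coefficients, so `α`
is injective. For an injective endomorphism `α ≠ id` of a domain the nuclei of the Yau twist
vanish: e.g. `(a, 1, 1)_* = 0` and `(a, 1, t)_* = 0` give `α a = a` and `a (α t - t) = 0`.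
If `k = 0`, then `α = id`, the twist is associative and `1` lies in every nucleus.
-/

open Polynomial

namespace Polynomial

variable {R : Type*} [CommSemiring R]

def derivativeCoeffs : R[X][X] →ₗ[R] R[X][X] :=
  lsum fun n => (monomial n).restrictScalars R ∘ₗ derivative

@[simp]
lemma coeff_derivativeCoeffs (w : R[X][X]) (n : ℕ) :
    (derivativeCoeffs w).coeff n = derivative (w.coeff n) := by
  induction w using Polynomial.induction_on' with
  | add v w hv hw => simp [hv, hw]
  | monomial m c => by_cases h : m = n <;> simp [derivativeCoeffs, coeff_monomial, h]

lemma derivativeCoeffs_C_mul (c : R[X]) (w : R[X][X]) :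
    derivativeCoeffs (C c * w) = C (derivative c) * w + C c * derivativeCoeffs w := by
  ext1 n; simp [derivative_mul]

@[simp]
lemma derivativeCoeffs_monomial (n : ℕ) (c : R[X]) :
    derivativeCoeffs (monomial n c) = monomial n (derivative c) := by
  ext1 m; by_cases h : n = m <;> simp [coeff_monomial, h]

lemma natDegree_derivativeCoeffs_le (w : R[X][X]) :
    (derivativeCoeffs w).natDegree ≤ w.natDegree :=
  natDegree_le_iff_coeff_eq_zero.2 fun n hn => by simp [coeff_eq_zero_of_natDegree_lt hn]

lemma map_compRingHom_derivativeCoeffs {f : R[X]} (hf : derivative f = 1) (w : R[X][X]) :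
    map (compRingHom f) (derivativeCoeffs w) = derivativeCoeffs (map (compRingHom f) w) := by
  ext1 n; simp [derivative_comp, hf]

lemma compRingHom_injective {R : Type*} [CommRing R] [IsDomain R] {f : R[X]}
    (hf : f.natDegree ≠ 0) : Function.Injective (compRingHom f) := by
  have hfC : f ≠ C (f.coeff 0) := fun h => hf (by rw [h, natDegree_C])
  rw [injective_iff_map_eq_zero]
  intro c hc
  simpa [comp_eq_zero_iff, hfC] using hc

lemma sum_smul_X_pow_eq_zero_iff {R : Type*} [Semiring R] (s : Finset ℕ) (k : ℕ → R) :
    ∑ i ∈ s, k i • (X : R[X]) ^ i = 0 ↔ ∀ i ∈ s, k i = 0 := by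
  refine ⟨fun h i hi => ?_, fun h => Finset.sum_eq_zero fun i hi => by simp [h i hi]⟩
  simpa [finsetSum_coeff, coeff_X_pow, hi] using congrArg (coeff · i) h

end Polynomial

namespace Weyl

variable {K : Type*} [Field K]

lemma x_mul_y : Wx K * Wy K = Wy K * Wx K + 1 := by
  simpa [Wx, Wy] using RingQuot.mkAlgHom_rel K (WeylRel.comm (K := K))

theorem induction_on {P : Weyl K → Prop} (a : Weyl K) (algebraMap : ∀ r, P (algebraMap K _ r))
    (x : P (Wx K)) (y : P (Wy K)) (add : ∀ a b, P a → P b → P (a + b))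
    (mul : ∀ a b, P a → P b → P (a * b)) : P a := by
  obtain ⟨a, rfl⟩ := RingQuot.mkAlgHom_surjective K (WeylRel K) a
  induction a with
  | grade0 r => simpa only [AlgHom.commutes] using algebraMap r
  | grade1 i => fin_cases i; exacts [x, y]
  | mul a b ha hb => simpa only [map_mul] using mul _ _ ha hb
  | add a b ha hb => simpa only [map_add] using add _ _ ha hb

lemma x_mul_aeval_y (c : K[X]) :
    Wx K * aeval (Wy K) c = aeval (Wy K) c * Wx K + aeval (Wy K) (derivative c) := by
  induction c using Polynomial.induction_on with
  | C a => simp [Algebra.commutes]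
  | add c d hc hd => simp only [map_add, mul_add, add_mul, hc, hd]; abel
  | monomial n a ih =>
    rw [pow_succ, ← mul_assoc, map_mul, aeval_X, ← mul_assoc, ih, add_mul, mul_assoc, x_mul_y]
    simp only [derivative_mul, derivative_X, mul_one, map_add, map_mul, aeval_X]
    noncomm_ring

variable (K) in
def actX : Module.End K K[X][X] := LinearMap.mulLeft K X + derivativeCoeffs

lemma actX_mul_mulLeft_C_X :
    actX K * LinearMap.mulLeft K (C X) = LinearMap.mulLeft K (C X) * actX K + 1 := by
  ext1 w
  simp only [actX, Module.End.mul_apply, LinearMap.add_apply, LinearMap.mulLeft_apply,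
    derivativeCoeffs_C_mul, derivative_X, map_one, one_mul, Module.End.one_apply]
  ring

def rep : Weyl K →ₐ[K] Module.End K K[X][X] :=
  RingQuot.liftAlgHom K ⟨FreeAlgebra.lift K ![actX K, LinearMap.mulLeft K (C X)], by
    rintro _ _ ⟨⟩
    simpa using actX_mul_mulLeft_C_X⟩

@[simp] lemma rep_x : rep (Wx K) = actX K := by simp [rep, Wx]
@[simp] lemma rep_y : rep (Wy K) = LinearMap.mulLeft K (C X) := by simp [rep, Wy]

@[simp] lemma rep_aeval_y (c : K[X]) : rep (aeval (Wy K) c) = LinearMap.mulLeft K (C c) := by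
  induction c using Polynomial.induction_on with
  | C a => ext1 w; simp [Algebra.smul_def, Polynomial.algebraMap_apply]
  | add c d hc hd => ext1 w; simp [hc, hd, add_mul]
  | monomial n a ih => rw [pow_succ, ← mul_assoc, map_mul, map_mul, ih]; ext1 w; simp [mul_assoc]

-- The normal form `∑ cₙ(y) xⁿ` of an element of `A₁` is stored as `∑ C cₙ * Xⁿ` in `K[y][x]`.
def normalForm (a : Weyl K) : K[X][X] := rep a 1

def ofNormalForm (w : K[X][X]) : Weyl K := eval₂ (aeval (Wy K)).toRingHom (Wx K) w

lemma ofNormalForm_add (v w : K[X][X]) :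
    ofNormalForm (v + w) = ofNormalForm v + ofNormalForm w :=
  eval₂_add _ _

@[simp] lemma ofNormalForm_monomial (n : ℕ) (c : K[X]) :
    ofNormalForm (monomial n c) = aeval (Wy K) c * Wx K ^ n :=
  eval₂_monomial _ _

lemma ofNormalForm_C_mul (c : K[X]) (w : K[X][X]) :
    ofNormalForm (C c * w) = aeval (Wy K) c * ofNormalForm w := by
  induction w using Polynomial.induction_on' with
  | add v w hv hw => rw [mul_add, ofNormalForm_add, ofNormalForm_add, hv, hw, mul_add]
  | monomial n a => simp [C_mul_monomial, mul_assoc]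

lemma ofNormalForm_actX (w : K[X][X]) :
    ofNormalForm (actX K w) = Wx K * ofNormalForm w := by
  induction w using Polynomial.induction_on' with
  | add v w hv hw => rw [map_add, ofNormalForm_add, ofNormalForm_add, hv, hw, mul_add]
  | monomial n a =>
    simp only [actX, LinearMap.add_apply, LinearMap.mulLeft_apply, X_mul_monomial,
      derivativeCoeffs_monomial, ofNormalForm_add, ofNormalForm_monomial]
    rw [← mul_assoc, x_mul_aeval_y, add_mul, mul_assoc, pow_succ']

lemma ofNormalForm_rep (a : Weyl K) (w : K[X][X]) :
    ofNormalForm (rep a w) = a * ofNormalForm w := by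
  induction a using induction_on generalizing w with
  | algebraMap r =>
    simp [Algebra.smul_def, Polynomial.algebraMap_apply, ofNormalForm_C_mul]
  | x => rw [rep_x, ofNormalForm_actX]
  | y => rw [rep_y, LinearMap.mulLeft_apply, ofNormalForm_C_mul, aeval_X]
  | add a b ha hb => rw [map_add, LinearMap.add_apply, ofNormalForm_add, ha, hb, add_mul]
  | mul a b ha hb => rw [map_mul, Module.End.mul_apply, ha, hb, mul_assoc]

lemma ofNormalForm_normalForm (a : Weyl K) : ofNormalForm (normalForm a) = a := by
  rw [normalForm, ofNormalForm_rep, ← monomial_zero_one, ofNormalForm_monomial]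
  simp

lemma normalForm_injective : Function.Injective (normalForm (K := K)) :=
  Function.LeftInverse.injective ofNormalForm_normalForm

@[simp] lemma normalForm_zero : normalForm (0 : Weyl K) = 0 := by simp [normalForm]

lemma normalForm_mul (a b : Weyl K) : normalForm (a * b) = rep a (normalForm b) := by
  simp [normalForm]

lemma normalForm_aeval_y (c : K[X]) : normalForm (aeval (Wy K) c) = C c := by
  simp [normalForm]

lemma natDegree_actX_apply_le (w : K[X][X]) : (actX K w).natDegree ≤ w.natDegree + 1 := by
  refine (natDegree_add_le _ _).trans (max_le ?_ ?_)
  · exact natDegree_mul_le.trans (by rw [natDegree_X, add_comm])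
  · exact (natDegree_derivativeCoeffs_le w).trans le_self_add

lemma coeff_actX_apply_succ (w : K[X][X]) (m : ℕ) :
    (actX K w).coeff (m + 1) = w.coeff m + derivative (w.coeff (m + 1)) := by
  simp [actX, coeff_X_mul]

lemma natDegree_actX_pow_apply_le (n : ℕ) (w : K[X][X]) :
    ((actX K ^ n) w).natDegree ≤ n + w.natDegree := by
  induction n with
  | zero => simp
  | succ n ih =>
    rw [pow_succ', Module.End.mul_apply]
    exact (natDegree_actX_apply_le _).trans (by omega)

lemma coeff_actX_pow_apply (n : ℕ) (w : K[X][X]) :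
    ((actX K ^ n) w).coeff (n + w.natDegree) = w.leadingCoeff := by
  induction n with
  | zero => simp
  | succ n ih =>
    have hlt := (natDegree_actX_pow_apply_le n w).trans_lt (lt_add_one (n + w.natDegree))
    rw [pow_succ', Module.End.mul_apply, add_right_comm, coeff_actX_apply_succ, ih,
      coeff_eq_zero_of_natDegree_lt hlt, derivative_zero, add_zero]

lemma rep_ofNormalForm (v : K[X][X]) :
    rep (ofNormalForm v) =
      ∑ n ∈ v.support, LinearMap.mulLeft K (C (v.coeff n)) * actX K ^ n := by
  simp [ofNormalForm, eval₂_eq_sum, Polynomial.sum_def]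

lemma coeff_rep_ofNormalForm (v w : K[X][X]) :
    (rep (ofNormalForm v) w).coeff (v.natDegree + w.natDegree) =
      v.leadingCoeff * w.leadingCoeff := by
  rw [rep_ofNormalForm, LinearMap.sum_apply, finsetSum_coeff, Finset.sum_eq_single v.natDegree]
  · simp [coeff_actX_pow_apply]
  · intro n hn hne
    have hlt : n < v.natDegree := (le_natDegree_of_mem_supp n hn).lt_of_ne hne
    have := (natDegree_actX_pow_apply_le n w).trans_lt (Nat.add_lt_add_right hlt w.natDegree)
    simp [coeff_eq_zero_of_natDegree_lt this]
  · intro h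
    simp [notMem_support_iff.mp h]

lemma coeff_normalForm_mul (a b : Weyl K) :
    (normalForm (a * b)).coeff ((normalForm a).natDegree + (normalForm b).natDegree) =
      (normalForm a).leadingCoeff * (normalForm b).leadingCoeff := by
  simpa only [ofNormalForm_normalForm, ← normalForm_mul] using
    coeff_rep_ofNormalForm (normalForm a) (normalForm b)

lemma aeval_y_injective : Function.Injective (aeval (Wy K) : K[X] →ₐ[K] Weyl K) :=
  fun c d h => C_injective (by simpa only [normalForm_aeval_y] using congrArg normalForm h)

lemma normalForm_ne_zero {a : Weyl K} (ha : a ≠ 0) : normalForm a ≠ 0 :=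
  normalForm_zero (K := K) ▸ normalForm_injective.ne ha

instance : IsDomain (Weyl K) :=
  have : Nontrivial (Weyl K) := (aeval_y_injective (K := K)).nontrivial
  have : NoZeroDivisors (Weyl K) := ⟨fun {a b} hab => by
    by_contra! h
    have hcoeff := coeff_normalForm_mul a b
    rw [hab, normalForm_zero, coeff_zero] at hcoeff
    exact mul_ne_zero (leadingCoeff_ne_zero.2 (normalForm_ne_zero h.1))
      (leadingCoeff_ne_zero.2 (normalForm_ne_zero h.2)) hcoeff.symm⟩
  NoZeroDivisors.to_isDomain _

theorem algHom_ext {A : Type*} [Semiring A] [Algebra K A] {φ ψ : Weyl K →ₐ[K] A}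
    (hx : φ (Wx K) = ψ (Wx K)) (hy : φ (Wy K) = ψ (Wy K)) : φ = ψ := by
  ext i
  fin_cases i
  exacts [hx, hy]

lemma exists_apply_ne_iff {α : Weyl K →ₐ[K] Weyl K} (hαx : α (Wx K) = Wx K) :
    (∃ a, α a ≠ a) ↔ α (Wy K) ≠ Wy K := by
  refine ⟨fun ⟨a, ha⟩ hαy => ha ?_, fun h => ⟨_, h⟩⟩
  rw [algHom_ext (ψ := AlgHom.id K _) hαx hαy, AlgHom.id_apply]

section Endomorphism

variable {f : K[X]} {α : Weyl K →ₐ[K] Weyl K}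

lemma map_compRingHom_rep (hf : derivative f = 1) (hαx : α (Wx K) = Wx K)
    (hαy : α (Wy K) = aeval (Wy K) f) (a : Weyl K) (w : K[X][X]) :
    map (compRingHom f) (rep a w) = rep (α a) (map (compRingHom f) w) := by
  induction a using induction_on generalizing w with
  | algebraMap r => simp [Algebra.smul_def, Polynomial.algebraMap_apply]
  | x => simp [hαx, actX, map_compRingHom_derivativeCoeffs hf]
  | y => simp [hαy]
  | add a b ha hb => simp [ha, hb]
  | mul a b ha hb => simp [ha, hb]

lemma normalForm_apply_eq_map (hf : derivative f = 1) (hαx : α (Wx K) = Wx K)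
    (hαy : α (Wy K) = aeval (Wy K) f) (a : Weyl K) :
    normalForm (α a) = map (compRingHom f) (normalForm a) := by
  simpa [normalForm] using (map_compRingHom_rep hf hαx hαy a 1).symm

lemma injective_of_derivative_eq_one (hf : derivative f = 1) (hαx : α (Wx K) = Wx K)
    (hαy : α (Wy K) = aeval (Wy K) f) : Function.Injective α := by
  intro a b hab
  apply normalForm_injective
  have hf0 : f.natDegree ≠ 0 := fun h => by simp [derivative_of_natDegree_zero h] at hf
  apply map_injective _ (compRingHom_injective hf0)
  simpa only [normalForm_apply_eq_map hf hαx hαy] using congrArg normalForm hab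

end Endomorphism

end Weyl

section YauTwist

variable {A F : Type*} [FunLike F A A]

-- The nuclei of the Yau twist `a * b := α (a b)` of `A`, whose associator is
-- `(a, b, c) ↦ α (α (a b) c) - α (a α (b c))`.
def yauLeftNucleus [Mul A] (α : F) : Set A :=
  {a | ∀ b c, α (α (a * b) * c) = α (a * α (b * c))}

def yauMiddleNucleus [Mul A] (α : F) : Set A :=
  {b | ∀ a c, α (α (a * b) * c) = α (a * α (b * c))}

def yauRightNucleus [Mul A] (α : F) : Set A :=
  {c | ∀ a b, α (α (a * b) * c) = α (a * α (b * c))}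

lemma yauLeftNucleus_eq_univ [Semigroup A] {α : F} (h : ∀ a, α a = a) :
    yauLeftNucleus α = Set.univ :=
  Set.eq_univ_of_forall fun a b c => by simp [h, mul_assoc]

variable [Ring A] [IsDomain A] [RingHomClass F A A] {α : F}

lemma yauLeftNucleus_eq_zero (hα : Function.Injective α) {t : A} (ht : α t ≠ t) :
    yauLeftNucleus α = {0} := by
  refine Set.eq_singleton_iff_unique_mem.2 ⟨fun b c => by simp, fun a ha => ?_⟩
  have hαa : α a = a := by simpa using hα (ha 1 1)
  have hat : a * t = a * α t := by simpa [hαa] using hα (ha 1 t)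
  by_contra h0
  exact ht (mul_left_cancel₀ h0 hat).symm

lemma yauMiddleNucleus_eq_zero (hα : Function.Injective α) {t : A} (ht : α t ≠ t) :
    yauMiddleNucleus α = {0} := by
  refine Set.eq_singleton_iff_unique_mem.2 ⟨fun a c => by simp, fun b hb => ?_⟩
  have hbt : α b * t = α b * α t := by simpa using hα (hb 1 t)
  by_contra h0
  exact ht (mul_left_cancel₀ ((map_ne_zero_iff α hα).2 h0) hbt).symm

lemma yauRightNucleus_eq_zero (hα : Function.Injective α) {t : A} (ht : α t ≠ t) :
    yauRightNucleus α = {0} := by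
  refine Set.eq_singleton_iff_unique_mem.2 ⟨fun a b => by simp, fun c hc => ?_⟩
  have hαc : α c = c := by simpa using (hα (hc 1 1)).symm
  have htc : α t * c = t * c := by simpa [hαc] using hα (hc t 1)
  by_contra h0
  exact ht (mul_right_cancel₀ h0 htc)

theorem yauNuclei_eq_zero_iff (hα : Function.Injective α) :
    (yauLeftNucleus α = {0} ∧ yauMiddleNucleus α = {0} ∧ yauRightNucleus α = {0}) ↔
      ∃ t, α t ≠ t := by
  refine ⟨fun ⟨hL, _, _⟩ => ?_, fun ⟨t, ht⟩ => ⟨yauLeftNucleus_eq_zero hα ht,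
    yauMiddleNucleus_eq_zero hα ht, yauRightNucleus_eq_zero hα ht⟩⟩
  by_contra! h
  have h1 : (1 : A) ∈ yauLeftNucleus α := yauLeftNucleus_eq_univ h ▸ Set.mem_univ 1
  exact one_ne_zero (hL ▸ h1 : (1 : A) ∈ ({0} : Set A))

end YauTwist

/-- For the hom-associative Weyl algebra `A₁ᵏ` (the Yau twist of `A₁` by `α_k`, with product
`a * b := α_k (a·b)` and associator `(a,b,c)_* = (a*b)*c − a*(b*c)`), the left, middle, and
right nuclei all equal `{0}` if and only if `k ≠ 0`. -/
theorem homWeyl_nuclei_eq_zero_iff (K : Type*) [Field K] (p : ℕ) (hp : p.Prime)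
    [CharP K p] (M : ℕ) (k : ℕ → K) (α : Weyl K →ₐ[K] Weyl K)
    (hx : α (Wx K) = Wx K)
    (hy : α (Wy K) = Wy K + ∑ i ∈ Finset.range (M + 1), k i • (Wy K) ^ (i * p)) :
    ({a : Weyl K | ∀ b c : Weyl K, α (α (a * b) * c) = α (a * α (b * c))} = {0} ∧
     {b : Weyl K | ∀ a c : Weyl K, α (α (a * b) * c) = α (a * α (b * c))} = {0} ∧
     {c : Weyl K | ∀ a b : Weyl K, α (α (a * b) * c) = α (a * α (b * c))} = {0}) ↔
    ¬ (∀ i ∈ Finset.range (M + 1), k i = 0) := by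
  set g : K[X] := ∑ i ∈ Finset.range (M + 1), k i • X ^ i with hg
  have hαy : α (Wy K) = aeval (Wy K) (X + expand K p g) := by
    simp [hy, hg, map_sum, ← pow_mul, mul_comm]
  have hf : derivative (X + expand K p g) = 1 := by simp [derivative_expand]
  refine (yauNuclei_eq_zero_iff (Weyl.injective_of_derivative_eq_one hf hx hαy)).trans ?_
  rw [Weyl.exists_apply_ne_iff hx, hαy, map_add, aeval_X, Ne, add_eq_left,
    map_eq_zero_iff _ Weyl.aeval_y_injective, expand_eq_zero hp.pos, hg,
    sum_smul_X_pow_eq_zero_iff]
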